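/- arXiv:2003.08894 — 2 statements merged into one kernel-verified Lean document; each statement's English description precedes it below -/
import Mathlib

section
/- Let H be a geodesic space with Δ-thin triangles, let τ be an isometry of H, and let x ∈ H. Then there is a point y on a geodesic segment [x, τx] such that |d(y, τy) − t(τ)| ≤ 28Δ, where t(τ) = inf{d(z, τz) : z ∈ H} is the translation length of τ. -/
open Set Filter Metric

section Common

variable {H : Type*} [MetricSpace H]

/-- `γ` parametrizes a geodesic from `a` to `b` by arclength on `[0, dist a b]`. -/
def IsGeodesicSegment (γ : ℝ → H) (a b : H) : Prop :=
  γ 0 = a ∧ γ (dist a b) = b ∧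
    ∀ s ∈ Set.Icc (0:ℝ) (dist a b), ∀ t ∈ Set.Icc (0:ℝ) (dist a b),
      dist (γ s) (γ t) = |s - t|

/-- A geodesic space: every pair of points is joined by a geodesic. -/
def GeodesicSpace (H : Type*) [MetricSpace H] : Prop :=
  ∀ a b : H, ∃ γ : ℝ → H, IsGeodesicSegment γ a b

/-- The image of a geodesic segment from `a` to `b`. -/
def segImage (γ : ℝ → H) (a b : H) : Set H :=
  γ '' Set.Icc 0 (dist a b)

/-- A space has `Δ`-thin triangles if each side of every geodesic triangle is contained
in the `Δ`-neighborhood of the union of the other two sides. -/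
def ThinTriangles (H : Type*) [MetricSpace H] (Δ : ℝ) : Prop :=
  ∀ a b c : H, ∀ γab γbc γca : ℝ → H,
    IsGeodesicSegment γab a b → IsGeodesicSegment γbc b c → IsGeodesicSegment γca c a →
      ∀ x ∈ segImage γab a b, ∃ y ∈ segImage γbc b c ∪ segImage γca c a, dist x y ≤ Δ

/-- An arc from `a` to `b`, parametrized (injectively and continuously) by `[0,1]`. -/
def IsArcParam (α : ℝ → H) (a b : H) : Prop :=
  ContinuousOn α (Set.Icc 0 1) ∧ Set.InjOn α (Set.Icc 0 1) ∧ α 0 = a ∧ α 1 = b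

/-- An `ℝ`-tree: a metric space in which every pair of points is joined by a geodesic
(so it is a path-metric space and arcs are isometric to intervals of `ℝ`) and in which
the arc joining two points is unique. -/
def IsRTree (X : Type*) [MetricSpace X] : Prop :=
  (∀ a b : X, ∃ γ : ℝ → X, IsGeodesicSegment γ a b) ∧
  ∀ a b : X, ∀ α β : ℝ → X, IsArcParam α a b → IsArcParam β a b →
    α '' Set.Icc 0 1 = β '' Set.Icc 0 1

/-- The translation length of an isometry. -/
noncomputable def translationLength {X : Type*} [MetricSpace X] (τ : X ≃ᵢ X) : ℝ :=
  ⨅ x : X, dist x (τ x)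

/-- The core of an isometry of an `ℝ`-tree: points moved the minimal distance. -/
def isomCore {X : Type*} [MetricSpace X] (τ : X ≃ᵢ X) : Set X :=
  {x : X | dist x (τ x) = translationLength τ}

/-- An elliptic isometry: one having a fixed point. -/
def IsElliptic {X : Type*} [MetricSpace X] (τ : X ≃ᵢ X) : Prop :=
  ∃ x, τ x = x

/-- A hyperbolic isometry of an `ℝ`-tree: positive translation length, with core
isometric to the real line (its axis). -/
def IsHyperbolicIsom {X : Type*} [MetricSpace X] (τ : X ≃ᵢ X) : Prop :=
  0 < translationLength τ ∧
    ∃ e : ℝ → X, (∀ s t : ℝ, dist (e s) (e t) = |s - t|) ∧ Set.range e = isomCore τ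

/-- A metric simplicial tree: an `ℝ`-tree together with a closed discrete set `V` of
vertices such that each connected component of the complement of `V` is an open edge:
it is the interior of a geodesic segment of positive length with endpoints in `V`. -/
def IsMetricSimplicialTree (X : Type*) [MetricSpace X] : Prop :=
  IsRTree X ∧
    ∃ V : Set X, IsClosed V ∧
      (∀ v ∈ V, ∃ ε > 0, ∀ w ∈ V, dist v w < ε → w = v) ∧
      ∀ x ∈ Vᶜ, ∃ L > (0:ℝ), ∃ f : ℝ → X,
        (∀ s ∈ Set.Icc (0:ℝ) L, ∀ t ∈ Set.Icc (0:ℝ) L, dist (f s) (f t) = |s - t|) ∧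
        f '' Set.Ioo 0 L = connectedComponentIn Vᶜ x ∧ f 0 ∈ V ∧ f L ∈ V

end Common

private lemma IsGeodesicSegment.continuousOn' {H : Type*} [MetricSpace H] {γ : ℝ → H} {a b : H}
    (h : IsGeodesicSegment γ a b) : ContinuousOn γ (Set.Icc 0 (dist a b)) := by
  apply LipschitzOnWith.continuousOn (K := 1)
  apply LipschitzOnWith.of_dist_le_mul
  intro s hs u hu
  rw [h.2.2 s hs u hu, NNReal.coe_one, one_mul, Real.dist_eq]

private lemma IsGeodesicSegment.isCompact_segImage' {H : Type*} [MetricSpace H] {γ : ℝ → H}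
    {a b : H} (h : IsGeodesicSegment γ a b) : IsCompact (segImage γ a b) :=
  isCompact_Icc.image_of_continuousOn h.continuousOn'

private lemma closed_near_set' {H : Type*} [MetricSpace H] {γ : ℝ → H} {D Δ : ℝ} {K : Set H}
    (hγ : ContinuousOn γ (Set.Icc 0 D)) (hK : IsCompact K) (hKne : K.Nonempty) :
    IsClosed {s | s ∈ Set.Icc 0 D ∧ ∃ p ∈ K, dist (γ s) p ≤ Δ} := by
  have heq : {s | s ∈ Set.Icc 0 D ∧ ∃ p ∈ K, dist (γ s) p ≤ Δ}
      = Set.Icc 0 D ∩ γ ⁻¹' {h | Metric.infDist h K ≤ Δ} := by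
    ext s
    simp only [Set.mem_setOf_eq, Set.mem_inter_iff, Set.mem_preimage]
    refine and_congr_right fun _ => ⟨?_, ?_⟩
    · rintro ⟨p, hpK, hpd⟩
      exact le_trans (Metric.infDist_le_dist_of_mem hpK) hpd
    · intro hinf
      obtain ⟨p, hpK, hpd⟩ := hK.exists_infDist_eq_dist hKne (γ s)
      exact ⟨p, hpK, hpd ▸ hinf⟩
  rw [heq]
  exact hγ.preimage_isClosed_of_isClosed isClosed_Icc
    (isClosed_le (Metric.continuous_infDist_pt K) continuous_const)

/-- In a geodesic space with `Δ`-thin triangles, for every isometry `τ`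
and every point `x` there is a point `y` on a geodesic segment `[x, τx]` with
`|d(y, τy) − t(τ)| ≤ 28Δ`. -/
theorem exists_point_on_geodesic_approx_translation_length
    {H : Type*} [MetricSpace H] [Nonempty H] {Δ : ℝ} (hΔ : 0 < Δ)
    (hgeo : GeodesicSpace H) (hthin : ThinTriangles H Δ)
    (τ : H ≃ᵢ H) (x : H) :
    ∃ γ : ℝ → H, IsGeodesicSegment γ x (τ x) ∧
      ∃ y ∈ segImage γ x (τ x),
        |dist y (τ y) - translationLength τ| ≤ 28 * Δ := by
  obtain ⟨γ, hγ⟩ := hgeo x (τ x)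
  refine ⟨γ, hγ, ?_⟩
  set t := translationLength τ with ht
  have hbdd : BddBelow (Set.range fun h : H => dist h (τ h)) :=
    ⟨0, by rintro _ ⟨h, rfl⟩; exact dist_nonneg⟩
  have htle : ∀ h : H, t ≤ dist h (τ h) := fun h => ciInf_le hbdd h
  have htlt : t < t + Δ := by linarith
  obtain ⟨z, hz⟩ := exists_lt_of_ciInf_lt htlt
  obtain ⟨α, hα⟩ := hgeo z x
  obtain ⟨β, hβ⟩ := hgeo (τ x) z
  obtain ⟨σ, hσ⟩ := hgeo z (τ z)
  set D := dist x (τ x) with hD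
  -- the two closed subsets of [0, D]
  set A := {s | s ∈ Set.Icc 0 D ∧ ∃ p ∈ segImage α z x, dist (γ s) p ≤ Δ} with hA
  set B := {s | s ∈ Set.Icc 0 D ∧ ∃ q ∈ segImage β (τ x) z, dist (γ s) q ≤ Δ} with hB
  have hAne : segImage α z x |>.Nonempty := ⟨α 0, 0, ⟨le_refl 0, dist_nonneg⟩, rfl⟩
  have hBne : segImage β (τ x) z |>.Nonempty := ⟨β 0, 0, ⟨le_refl 0, dist_nonneg⟩, rfl⟩
  have hAcl : IsClosed A := closed_near_set' hγ.continuousOn' hα.isCompact_segImage' hAne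
  have hBcl : IsClosed B := closed_near_set' hγ.continuousOn' hβ.isCompact_segImage' hBne
  have hcover : Set.Icc 0 D ⊆ A ∪ B := by
    intro s hs
    obtain ⟨w, hw, hwd⟩ := hthin x (τ x) z γ β α hγ hβ hα (γ s) ⟨s, hs, rfl⟩
    rcases hw with h | h
    · exact Or.inr ⟨hs, w, h, hwd⟩
    · exact Or.inl ⟨hs, w, h, hwd⟩
  have h0A : (Set.Icc 0 D ∩ A).Nonempty := by
    refine ⟨0, ⟨le_refl 0, dist_nonneg⟩, ⟨le_refl 0, dist_nonneg⟩, x, ?_, ?_⟩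
    · exact ⟨dist z x, ⟨dist_nonneg, le_refl _⟩, hα.2.1⟩
    · rw [hγ.1, dist_self]; exact hΔ.le
  have hDB : (Set.Icc 0 D ∩ B).Nonempty := by
    refine ⟨D, ⟨dist_nonneg, le_refl D⟩, ⟨dist_nonneg, le_refl D⟩, τ x, ?_, ?_⟩
    · exact ⟨0, ⟨le_refl 0, dist_nonneg⟩, hβ.1⟩
    · rw [hγ.2.1, dist_self]; exact hΔ.le
  obtain ⟨s, hsIcc, hsA, hsB⟩ :=
    isPreconnected_closed_iff.mp isPreconnected_Icc A B hAcl hBcl hcover h0A hDB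
  obtain ⟨_, p, hpmem, hpd⟩ := hsA
  obtain ⟨_, q, hqmem, hqd⟩ := hsB
  obtain ⟨u, huIcc, hpu⟩ := hpmem
  obtain ⟨v, hvIcc, hqv⟩ := hqmem
  subst hpu hqv
  refine ⟨γ s, ⟨s, hsIcc, rfl⟩, ?_⟩
  -- τ ∘ α is a geodesic from τ z to τ x
  have hdzx : dist (τ z) (τ x) = dist z x := τ.dist_eq z x
  have hτα : IsGeodesicSegment (fun r => τ (α r)) (τ z) (τ x) := by
    refine ⟨?_, ?_, ?_⟩
    · show τ (α 0) = τ z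
      rw [hα.1]
    · show τ (α (dist (τ z) (τ x))) = τ x
      rw [hdzx, hα.2.1]
    · intro s1 hs1 s2 hs2
      rw [hdzx] at hs1 hs2
      show dist (τ (α s1)) (τ (α s2)) = |s1 - s2|
      rw [τ.dist_eq, hα.2.2 s1 hs1 s2 hs2]
  obtain ⟨w, hw, hwd⟩ :=
    hthin (τ x) z (τ z) β σ (fun r => τ (α r)) hβ hσ hτα (β v) ⟨v, hvIcc, rfl⟩
  -- basic distances
  have hq_τx : dist (β v) (τ x) = v := by
    have := hβ.2.2 v hvIcc 0 ⟨le_refl 0, dist_nonneg⟩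
    rw [hβ.1] at this
    rw [this, sub_zero, abs_of_nonneg hvIcc.1]
  have hq_z : dist (β v) z = dist (τ x) z - v := by
    have := hβ.2.2 v hvIcc (dist (τ x) z) ⟨dist_nonneg, le_refl _⟩
    rw [hβ.2.1] at this
    rw [this, abs_of_nonpos (by linarith [hvIcc.2]), neg_sub]
  have hp_z : dist (α u) z = u := by
    have := hα.2.2 u huIcc 0 ⟨le_refl 0, dist_nonneg⟩
    rw [hα.1] at this
    rw [this, sub_zero, abs_of_nonneg huIcc.1]
  have hτy : dist (τ (α u)) (τ (γ s)) = dist (α u) (γ s) := τ.dist_eq _ _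
  have hzτz : dist z (τ z) ≤ t + Δ := hz.le
  -- main displacement bound: dist (γ s) (τ (γ s)) ≤ t + 7Δ
  have hmain : dist (γ s) (τ (γ s)) ≤ t + 7 * Δ := by
    rcases hw with hw | hw
    · -- w on [z, τ z]
      obtain ⟨r, hrIcc, rfl⟩ := hw
      have hw_τz : dist (σ r) (τ z) = dist z (τ z) - r := by
        have := hσ.2.2 r hrIcc (dist z (τ z)) ⟨dist_nonneg, le_refl _⟩
        rw [hσ.2.1] at this
        rw [this, abs_of_nonpos (by linarith [hrIcc.2]), neg_sub]
      have hz_w : dist z (σ r) = r := by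
        have h1 := hσ.2.2 r hrIcc 0 ⟨le_refl 0, dist_nonneg⟩
        rw [hσ.1] at h1
        rw [dist_comm, h1, sub_zero, abs_of_nonneg hrIcc.1]
      have hτzw : dist (τ z) (τ (σ r)) = r := by rw [τ.dist_eq, hz_w]
      have c1 : dist (γ s) (τ (γ s)) ≤ dist (γ s) (σ r) + dist (σ r) (τ (γ s)) :=
        dist_triangle _ _ _
      have c2 : dist (γ s) (σ r) ≤ dist (γ s) (β v) + dist (β v) (σ r) := dist_triangle _ _ _
      have c3 : dist (σ r) (τ (γ s)) ≤ dist (σ r) (τ z) + dist (τ z) (τ (γ s)) :=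
        dist_triangle _ _ _
      have c4 : dist (τ z) (τ (γ s)) ≤ dist (τ z) (τ (σ r)) + dist (τ (σ r)) (τ (γ s)) :=
        dist_triangle _ _ _
      have c5 : dist (τ (σ r)) (τ (γ s)) = dist (σ r) (γ s) := τ.dist_eq _ _
      have c6 : dist (σ r) (γ s) ≤ dist (σ r) (β v) + dist (β v) (γ s) := dist_triangle _ _ _
      have c7 : dist (β v) (γ s) = dist (γ s) (β v) := dist_comm _ _
      have c8 : dist (β v) (σ r) = dist (σ r) (β v) := dist_comm _ _
      linarith [hwd, hqd, hzτz]
    · -- w = τ (α r) on [τ z, τ x]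
      obtain ⟨r, hrIcc, rfl⟩ := hw
      rw [hdzx] at hrIcc
      have hur : dist (α u) (α r) = |u - r| := hα.2.2 u huIcc r hrIcc
      have hw_τx : dist (τ (α r)) (τ x) = dist z x - r := by
        have h1 := hα.2.2 r hrIcc (dist z x) ⟨dist_nonneg, le_refl _⟩
        rw [hα.2.1] at h1
        rw [τ.dist_eq, h1, abs_of_nonpos (by linarith [hrIcc.2]), neg_sub]
      -- |v - (dist z x - r)| ≤ Δ
      have e1 : |v - (dist z x - r)| ≤ Δ := by
        have h1 := abs_dist_sub_le (β v) (τ (α r)) (τ x)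
        rw [hq_τx, hw_τx] at h1
        exact h1.trans (by simpa using hwd)
      -- |u - (dist (τ x) z - v)| ≤ 2Δ
      have e2 : |u - (dist (τ x) z - v)| ≤ 2 * Δ := by
        have h1 := abs_dist_sub_le (α u) (β v) z
        rw [hp_z, hq_z] at h1
        have h2 : dist (α u) (β v) ≤ dist (α u) (γ s) + dist (γ s) (β v) :=
          dist_triangle _ _ _
        have h3 : dist (α u) (γ s) = dist (γ s) (α u) := dist_comm _ _
        linarith
      -- key inequalities relating dist (τ x) z and dist z x
      have f8 : dist (τ x) z ≤ dist z (τ z) + dist z x := by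
        have t1 : dist (τ x) z ≤ dist (τ x) (τ z) + dist (τ z) z := dist_triangle _ _ _
        have t2 : dist (τ x) (τ z) = dist x z := τ.dist_eq _ _
        have t3 : dist x z = dist z x := dist_comm _ _
        have t4 : dist (τ z) z = dist z (τ z) := dist_comm _ _
        linarith
      have f9 : dist z x ≤ dist z (τ z) + dist (τ x) z := by
        have u1 : dist (τ z) (τ x) ≤ dist (τ z) z + dist z (τ x) := dist_triangle _ _ _
        have u2 : dist (τ z) z = dist z (τ z) := dist_comm _ _
        have u3 : dist z (τ x) = dist (τ x) z := dist_comm _ _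
        linarith [hdzx]
      -- put it together: |u - r| ≤ t + 4Δ
      have habs : |u - r| ≤ t + 4 * Δ := by
        rw [abs_le] at e1 e2 ⊢
        constructor
        · linarith [e1.1, e1.2, e2.1, e2.2, f8, f9, hzτz]
        · linarith [e1.1, e1.2, e2.1, e2.2, f8, f9, hzτz]
      -- chain
      have c1 : dist (γ s) (τ (γ s)) ≤ dist (γ s) (β v) + dist (β v) (τ (γ s)) :=
        dist_triangle _ _ _
      have c2 : dist (β v) (τ (γ s)) ≤ dist (β v) (τ (α r)) + dist (τ (α r)) (τ (γ s)) :=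
        dist_triangle _ _ _
      have c3 : dist (τ (α r)) (τ (γ s)) ≤ dist (τ (α r)) (τ (α u)) + dist (τ (α u)) (τ (γ s)) :=
        dist_triangle _ _ _
      have c4 : dist (τ (α r)) (τ (α u)) = dist (α u) (α r) := by
        rw [τ.dist_eq, dist_comm]
      have c5 : dist (α u) (γ s) = dist (γ s) (α u) := dist_comm _ _
      linarith [hwd, hpd, hqd, habs, hur, hτy, c5]
  have hlow : t ≤ dist (γ s) (τ (γ s)) := htle (γ s)
  rw [abs_le]
  constructor <;> linarith
end

section
/- Let G be a group, K the complete graph with vertex set G, on which G acts by left multiplication (extended affinely over edges), and let H be a geodesic space with Δ-thin triangles. Let ρ : G → Isom(H) be a homomorphism and ι : K → H a ρ-equivariant straight map. Then the action σ of G on K preserves the pullback pseudo-metric d = ι*d_H, and for every g ∈ G, |t(σg) − t(ρg)| ≤ 28Δ, where t denotes translation length (with respect to d on K and d_H on H respectively). -/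
open Set Filter Metric

open scoped Classical

section CompleteGraph

/-- The convex combination `(1-t)·δ_u + t·δ_v` of two Dirac functions on `G`. -/
noncomputable def deltaComb {G : Type*} (u v : G) (t : ℝ) : G → ℝ :=
  fun x => (1 - t) * (if x = u then 1 else 0) + t * (if x = v then 1 else 0)

/-- The geometric realization of the complete graph `K(G)` with vertex set `G`:
all convex combinations of two Dirac functions; `deltaComb u v t` is the point at
parameter `t` on the edge joining the vertices `u` and `v`. -/
def KG (G : Type*) : Type _ :=
  {f : G → ℝ // ∃ u v : G, ∃ t : ℝ, t ∈ Set.Icc (0:ℝ) 1 ∧ f = deltaComb u v t}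

/-- The point at parameter `t ∈ [0,1]` on the edge of `K(G)` joining `u` to `v`. -/
noncomputable def kpt {G : Type*} (u v : G) (t : ℝ) (ht : t ∈ Set.Icc (0:ℝ) 1) : KG G :=
  ⟨deltaComb u v t, u, v, t, ht, rfl⟩

/-- The vertex of `K(G)` corresponding to `g : G`. -/
noncomputable def vtx {G : Type*} (g : G) : KG G :=
  kpt g g 0 ⟨le_refl _, zero_le_one⟩

/-- The action of `G` on `K(G)` by left multiplication on the vertices, extended
affinely over the edges. -/
noncomputable def leftMulKG {G : Type*} [Group G] (g : G) (p : KG G) : KG G :=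
  ⟨fun x => p.1 (g⁻¹ * x), by
    obtain ⟨u, v, t, ht, hf⟩ := p.2
    refine ⟨g * u, g * v, t, ht, ?_⟩
    funext x
    rw [hf]
    simp [deltaComb, inv_mul_eq_iff_eq_mul]⟩

/-- A map `ι : K(G) → H` is straight if it is linear on each edge of `K(G)`. -/
def StraightOnKG {G H : Type*} [MetricSpace H] (ι : KG G → H) : Prop :=
  ∀ u v : G, ∀ t : ℝ, ∀ ht : t ∈ Set.Icc (0:ℝ) 1,
    dist (ι (kpt u v 0 ⟨le_refl _, zero_le_one⟩)) (ι (kpt u v t ht))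
      = t * dist (ι (kpt u v 0 ⟨le_refl _, zero_le_one⟩))
          (ι (kpt u v 1 ⟨zero_le_one, le_refl _⟩))

/-- `r_S(x) = max {d(x, ρ(α)x) : α ∈ S}`. -/
noncomputable def rS {G H : Type*} [MetricSpace H] (S : Finset G) (hS : S.Nonempty)
    (ρ : G → (H ≃ᵢ H)) (x : H) : ℝ :=
  S.sup' hS (fun α => dist x (ρ α x))

/-- The rescaling factor `λ = (max {1, d(ι(1_G), ι(s)) : s ∈ S})⁻¹`. -/
noncomputable def rescaleFactor {G H : Type*} [Group G] [MetricSpace H]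
    (S : Finset G) (hS : S.Nonempty) (ι : KG G → H) : ℝ :=
  (max 1 (S.sup' hS fun s => dist (ι (vtx (1 : G))) (ι (vtx s))))⁻¹

end CompleteGraph

/-!
The lower bound holds because `ι (g • p) = ρ g (ι p)`: every displacement in `K(G)` is a
displacement in `H`. For the upper bound fix `x ∈ H` and a geodesic `γ` from `a = ι 1` to
`ρ g a`. The thin quadrilateral `a, ρ g a, ρ g x, x` puts `γ` within `2Δ` of the sides
`[x, a]`, `[x, ρ g x]` and `ρ g [x, a]`. By connectedness some point of `γ` is near
`[x, ρ g x]`, or near both `[x, a]` and `ρ g [x, a]`; either way it is moved at most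
`d(x, ρ g x) + 12Δ`. The point of the edge `[1, g]` whose image is at the same distance from
`a` lies within `2Δ` of it, since `ι` is straight, so it is moved at most `d(x, ρ g x) + 16Δ`.
-/

namespace IsGeodesicSegment

variable {H : Type*} [MetricSpace H] {γ : ℝ → H} {a b : H}

lemma dist_left_apply (h : IsGeodesicSegment γ a b) {s : ℝ} (hs : s ∈ Icc 0 (dist a b)) :
    dist a (γ s) = s := by
  have := h.2.2 0 ⟨le_rfl, dist_nonneg⟩ s hs
  rwa [h.1, zero_sub, abs_neg, abs_of_nonneg hs.1] at this

lemma dist_apply_right (h : IsGeodesicSegment γ a b) {s : ℝ} (hs : s ∈ Icc 0 (dist a b)) :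
    dist (γ s) b = dist a b - s := by
  have := h.2.2 s hs (dist a b) ⟨dist_nonneg, le_rfl⟩
  rwa [h.2.1, abs_of_nonpos (by linarith [hs.2]), neg_sub] at this

lemma left_mem_segImage (h : IsGeodesicSegment γ a b) : a ∈ segImage γ a b :=
  ⟨0, ⟨le_rfl, dist_nonneg⟩, h.1⟩

lemma right_mem_segImage (h : IsGeodesicSegment γ a b) : b ∈ segImage γ a b :=
  ⟨dist a b, ⟨dist_nonneg, le_rfl⟩, h.2.1⟩

lemma dist_add_dist_of_mem (h : IsGeodesicSegment γ a b) {y : H} (hy : y ∈ segImage γ a b) :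
    dist a y + dist y b = dist a b := by
  obtain ⟨s, hs, rfl⟩ := hy
  rw [h.dist_left_apply hs, h.dist_apply_right hs]
  ring

lemma dist_eq_abs_sub_of_mem (h : IsGeodesicSegment γ a b) {y y' : H}
    (hy : y ∈ segImage γ a b) (hy' : y' ∈ segImage γ a b) :
    dist y y' = |dist a y - dist a y'| := by
  obtain ⟨s, hs, rfl⟩ := hy
  obtain ⟨s', hs', rfl⟩ := hy'
  rw [h.2.2 s hs s' hs', h.dist_left_apply hs, h.dist_left_apply hs']

lemma const (a : H) : IsGeodesicSegment (fun _ => a) a a := by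
  refine ⟨rfl, rfl, fun s hs t ht => ?_⟩
  rw [dist_self] at hs ht
  rw [dist_self, le_antisymm hs.2 hs.1, le_antisymm ht.2 ht.1, sub_zero, abs_zero]

lemma isometryEquiv_comp (h : IsGeodesicSegment γ a b) (τ : H ≃ᵢ H) :
    IsGeodesicSegment (fun s => τ (γ s)) (τ a) (τ b) := by
  refine ⟨congrArg τ h.1, ?_, fun s hs t ht => ?_⟩
  · simp only [τ.dist_eq, h.2.1]
  · rw [τ.dist_eq] at hs ht
    rw [τ.dist_eq, h.2.2 s hs t ht]

lemma segImage_isometryEquiv_comp (τ : H ≃ᵢ H) :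
    segImage (fun s => τ (γ s)) (τ a) (τ b) = τ '' segImage γ a b := by
  rw [segImage, segImage, τ.dist_eq, image_image]

lemma continuousOn (h : IsGeodesicSegment γ a b) : ContinuousOn γ (Icc 0 (dist a b)) :=
  LipschitzOnWith.continuousOn (K := 1) <| LipschitzOnWith.of_dist_le_mul fun s hs t ht => by
    rw [h.2.2 s hs t ht, Real.dist_eq, NNReal.coe_one, one_mul]

lemma isCompact_segImage (h : IsGeodesicSegment γ a b) : IsCompact (segImage γ a b) :=
  isCompact_Icc.image_of_continuousOn h.continuousOn

lemma isPreconnected_segImage (h : IsGeodesicSegment γ a b) :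
    IsPreconnected (segImage γ a b) :=
  isPreconnected_Icc.image _ h.continuousOn

lemma exists_dist_le_of_mem_cthickening (h : IsGeodesicSegment γ a b) {r : ℝ} (hr : 0 ≤ r)
    {y : H} (hy : y ∈ cthickening r (segImage γ a b)) : ∃ w ∈ segImage γ a b, dist y w ≤ r := by
  rw [h.isCompact_segImage.cthickening_eq_biUnion_closedBall hr] at hy
  simpa only [mem_iUnion₂, mem_closedBall, exists_prop] using hy

end IsGeodesicSegment

namespace IsometryEquiv

variable {X : Type*} [PseudoMetricSpace X] (τ : X ≃ᵢ X)

lemma dist_apply_le_add_two_mul (w y : X) : dist w (τ w) ≤ dist y (τ y) + 2 * dist w y := by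
  have := dist_triangle4 w y (τ y) (τ w)
  rw [τ.dist_eq, dist_comm y w] at this
  linarith

lemma dist_apply_le_of_dist_add_dist_eq {x y : X} (h : dist x y + dist y (τ x) = dist x (τ x)) :
    dist y (τ y) ≤ dist x (τ x) := by
  have := dist_triangle y (τ x) (τ y)
  rw [τ.dist_eq x y] at this
  linarith

lemma dist_apply_le_of_dist_eq_abs_sub {x y y' : X} {c : ℝ}
    (hy : dist y y' = |dist x y - dist x y'|) (hc : dist y (τ y') ≤ c) :
    dist y (τ y) ≤ dist x (τ x) + 2 * c := by
  have h₁ := dist_triangle4 x (τ x) (τ y') y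
  have h₂ := dist_triangle4 (τ x) x y (τ y')
  rw [τ.dist_eq] at h₁ h₂
  have hyy' : dist y y' ≤ dist x (τ x) + c := by
    rw [hy, abs_le]
    constructor <;> linarith [dist_comm x (τ x), dist_comm y (τ y')]
  have h₃ := dist_triangle y (τ y') (τ y)
  rw [τ.dist_eq, dist_comm y' y] at h₃
  linarith

end IsometryEquiv

lemma translationLength_le_dist {X : Type*} [MetricSpace X] (τ : X ≃ᵢ X) (x : X) :
    translationLength τ ≤ dist x (τ x) :=
  ciInf_le ⟨0, forall_mem_range.2 fun _ => dist_nonneg⟩ x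

namespace ThinTriangles

variable {H : Type*} [MetricSpace H] {Δ : ℝ}

lemma nonneg (hthin : ThinTriangles H Δ) (a : H) : 0 ≤ Δ := by
  have hc := IsGeodesicSegment.const a
  obtain ⟨y, -, hy⟩ := hthin a a a _ _ _ hc hc hc a hc.left_mem_segImage
  exact dist_nonneg.trans hy

lemma dist_apply_le_of_dist_add_dist_eq (hthin : ThinTriangles H Δ) (hgeo : GeodesicSpace H)
    {γ : ℝ → H} {a b z : H} (hγ : IsGeodesicSegment γ a b)
    (hz : dist a z + dist z b = dist a b) : dist z (γ (dist a z)) ≤ 2 * Δ := by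
  have hr : dist a z ∈ Icc 0 (dist a b) :=
    ⟨dist_nonneg, by linarith [dist_nonneg (x := z) (y := b)]⟩
  have hγa := hγ.dist_left_apply hr
  have hγb := hγ.dist_apply_right hr
  obtain ⟨σ, hσ⟩ := hgeo b z
  obtain ⟨σ', hσ'⟩ := hgeo z a
  obtain ⟨y, hy, hdy⟩ := hthin a b z γ σ σ' hγ hσ hσ' _ ⟨_, hr, rfl⟩
  rcases hy with hy | hy
  · have := hσ.dist_add_dist_of_mem hy
    linarith [dist_triangle b y (γ (dist a z)), dist_triangle z y (γ (dist a z)),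
      dist_comm b (γ (dist a z)), dist_comm y (γ (dist a z)), dist_comm z y, dist_comm z b]
  · have := hσ'.dist_add_dist_of_mem hy
    linarith [dist_triangle a y (γ (dist a z)), dist_triangle z y (γ (dist a z)),
      dist_comm y (γ (dist a z)), dist_comm z a, dist_comm y a]

/-- Quadrilaterals are `2Δ`-thin: cut along a geodesic from `b` to `d`. -/
lemma segImage_subset_cthickening (hthin : ThinTriangles H Δ) (hgeo : GeodesicSpace H)
    {a b c d : H} {γab γda γdc γcb : ℝ → H} (hab : IsGeodesicSegment γab a b)
    (hda : IsGeodesicSegment γda d a) (hdc : IsGeodesicSegment γdc d c)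
    (hcb : IsGeodesicSegment γcb c b) :
    segImage γab a b ⊆
      cthickening (2 * Δ) (segImage γda d a ∪ segImage γdc d c ∪ segImage γcb c b) := by
  intro p hp
  obtain ⟨δ, hδ⟩ := hgeo b d
  obtain ⟨y, hy, hpy⟩ := hthin a b d γab δ γda hab hδ hda p hp
  rcases hy with hy | hy
  · obtain ⟨y', hy', hyy'⟩ := hthin b d c δ γdc γcb hδ hdc hcb y hy
    refine mem_cthickening_of_dist_le p y' _ _ ?_ (by linarith [dist_triangle p y y'])
    rcases hy' with hy' | hy'
    exacts [Or.inl (Or.inr hy'), Or.inr hy']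
  · exact mem_cthickening_of_dist_le p y _ _ (Or.inl (Or.inl hy))
      (by linarith [hthin.nonneg a])

lemma exists_dist_apply_le (hthin : ThinTriangles H Δ) (hgeo : GeodesicSpace H)
    (τ : H ≃ᵢ H) {γ : ℝ → H} {a : H} (hγ : IsGeodesicSegment γ a (τ a)) (x : H) :
    ∃ y ∈ segImage γ a (τ a), dist y (τ y) ≤ dist x (τ x) + 12 * Δ := by
  have hΔ := hthin.nonneg a
  obtain ⟨α, hα⟩ := hgeo x a
  obtain ⟨β, hβ⟩ := hgeo x (τ x)
  have hτα := hα.isometryEquiv_comp τ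
  set S₁ := segImage α x a
  set S₂ := segImage β x (τ x)
  set S₃ := segImage (fun s => τ (α s)) (τ x) (τ a)
  have hcover := hthin.segImage_subset_cthickening hgeo hγ hα hβ hτα
  rw [cthickening_union, cthickening_union] at hcover
  -- `γ` runs from near `S₁` to near `S₃`, so by connectedness it has a point near both,
  -- unless it comes near `S₂`
  obtain ⟨y, hyγ, hy⟩ : ∃ y ∈ segImage γ a (τ a),
      y ∈ cthickening (2 * Δ) S₂ ∨ y ∈ cthickening (2 * Δ) S₁ ∧ y ∈ cthickening (2 * Δ) S₃ := by
    obtain ⟨y, hyγ, hy₁₂, hy₃₂⟩ := isPreconnected_closed_iff.1 hγ.isPreconnected_segImage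
      (cthickening (2 * Δ) S₁ ∪ cthickening (2 * Δ) S₂)
      (cthickening (2 * Δ) S₃ ∪ cthickening (2 * Δ) S₂)
      (isClosed_cthickening.union isClosed_cthickening)
      (isClosed_cthickening.union isClosed_cthickening)
      (fun y hy => by
        rcases hcover hy with (h | h) | h
        exacts [Or.inl (Or.inl h), Or.inl (Or.inr h), Or.inr (Or.inl h)])
      ⟨a, hγ.left_mem_segImage, Or.inl (self_subset_cthickening _ hα.right_mem_segImage)⟩
      ⟨τ a, hγ.right_mem_segImage, Or.inl (self_subset_cthickening _ hτα.right_mem_segImage)⟩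
    rw [mem_union] at hy₁₂ hy₃₂
    exact ⟨y, hyγ, by tauto⟩
  refine ⟨y, hyγ, ?_⟩
  rcases hy with hy₂ | ⟨hy₁, hy₃⟩
  · obtain ⟨w, hw, hyw⟩ := hβ.exists_dist_le_of_mem_cthickening (by linarith) hy₂
    linarith [τ.dist_apply_le_add_two_mul y w,
      τ.dist_apply_le_of_dist_add_dist_eq (hβ.dist_add_dist_of_mem hw)]
  · obtain ⟨w, hw, hyw⟩ := hα.exists_dist_le_of_mem_cthickening (by linarith) hy₁
    obtain ⟨w₃, hw₃, hyw₃⟩ := hτα.exists_dist_le_of_mem_cthickening (by linarith) hy₃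
    rw [IsGeodesicSegment.segImage_isometryEquiv_comp] at hw₃
    obtain ⟨w', hw', rfl⟩ := hw₃
    have hw_disp := τ.dist_apply_le_of_dist_eq_abs_sub (hα.dist_eq_abs_sub_of_mem hw hw')
      (c := 4 * Δ) (by linarith [dist_triangle w y (τ w'), dist_comm w y])
    linarith [τ.dist_apply_le_add_two_mul y w]

end ThinTriangles

section CompleteGraph

variable {G : Type*}

lemma kpt_zero (u v : G) (h : (0 : ℝ) ∈ Icc (0 : ℝ) 1) : kpt u v 0 h = vtx u := by
  apply Subtype.ext
  funext x
  simp [kpt, vtx, deltaComb]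

lemma kpt_one (u v : G) (h : (1 : ℝ) ∈ Icc (0 : ℝ) 1) : kpt u v 1 h = vtx v := by
  apply Subtype.ext
  funext x
  simp [kpt, vtx, deltaComb]

lemma kpt_one_sub (u v : G) {t : ℝ} (ht : t ∈ Icc (0 : ℝ) 1) (ht' : 1 - t ∈ Icc (0 : ℝ) 1) :
    kpt v u (1 - t) ht' = kpt u v t ht := by
  apply Subtype.ext
  funext x
  simp only [kpt, deltaComb]
  ring

lemma leftMulKG_vtx [Group G] (g h : G) : leftMulKG g (vtx h) = vtx (g * h) := by
  apply Subtype.ext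
  funext x
  simp [leftMulKG, vtx, kpt, deltaComb, inv_mul_eq_iff_eq_mul]

variable {H : Type*} [MetricSpace H] {ι : KG G → H}

lemma StraightOnKG.dist_vtx_kpt (h : StraightOnKG ι) (u v : G) {t : ℝ} (ht : t ∈ Icc (0 : ℝ) 1) :
    dist (ι (vtx u)) (ι (kpt u v t ht)) = t * dist (ι (vtx u)) (ι (vtx v)) := by
  have := h u v t ht
  rwa [show kpt u v 0 ⟨le_rfl, zero_le_one⟩ = vtx u from kpt_zero u v _,
    show kpt u v 1 ⟨zero_le_one, le_rfl⟩ = vtx v from kpt_one u v _] at this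

lemma StraightOnKG.exists_dist_eq (h : StraightOnKG ι) (u v : G) {r : ℝ}
    (hr : r ∈ Icc 0 (dist (ι (vtx u)) (ι (vtx v)))) :
    ∃ p : KG G, dist (ι (vtx u)) (ι p) = r ∧
      dist (ι p) (ι (vtx v)) = dist (ι (vtx u)) (ι (vtx v)) - r := by
  generalize hDdef : dist (ι (vtx u)) (ι (vtx v)) = D at hr ⊢
  rcases hr.1.eq_or_lt with rfl | hr₀
  · exact ⟨vtx u, dist_self _, by rw [sub_zero, hDdef]⟩
  have hD : 0 < D := hr₀.trans_le hr.2
  have ht : r / D ∈ Icc (0 : ℝ) 1 := ⟨by positivity, div_le_one_of_le₀ hr.2 hD.le⟩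
  have ht' : 1 - r / D ∈ Icc (0 : ℝ) 1 := ⟨by linarith [ht.2], by linarith [ht.1]⟩
  refine ⟨kpt u v (r / D) ht, ?_, ?_⟩
  · rw [h.dist_vtx_kpt, hDdef, div_mul_cancel₀ r hD.ne']
  · rw [dist_comm, ← kpt_one_sub u v ht ht', h.dist_vtx_kpt, dist_comm, hDdef, sub_mul, one_mul,
      div_mul_cancel₀ r hD.ne']

lemma StraightOnKG.exists_dist_apply_le {Δ : ℝ} (h : StraightOnKG ι)
    (hthin : ThinTriangles H Δ) (hgeo : GeodesicSpace H) (τ : H ≃ᵢ H) {u v : G}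
    (huv : ι (vtx v) = τ (ι (vtx u))) (x : H) :
    ∃ p : KG G, dist (ι p) (τ (ι p)) ≤ dist x (τ x) + 16 * Δ := by
  obtain ⟨γ, hγ⟩ := hgeo (ι (vtx u)) (τ (ι (vtx u)))
  obtain ⟨_, ⟨r, hr, rfl⟩, hdisp⟩ := hthin.exists_dist_apply_le hgeo τ hγ x
  obtain ⟨p, hup, hpv⟩ := h.exists_dist_eq u v (huv ▸ hr)
  rw [huv] at hpv
  have hclose := hthin.dist_apply_le_of_dist_add_dist_eq hgeo hγ (z := ι p) (by linarith)
  rw [hup] at hclose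
  exact ⟨p, by linarith [τ.dist_apply_le_add_two_mul (ι p) (γ r)]⟩

end CompleteGraph

theorem translation_length_pullback_estimate_general {G : Type u} [Group G]
    {H : Type v} [MetricSpace H] {Δ : ℝ}
    (hgeo : GeodesicSpace H) (hthin : ThinTriangles H Δ)
    (ρ : G →* (H ≃ᵢ H)) (ι : KG G → H)
    (hstraight : StraightOnKG ι)
    (hequiv : ∀ g : G, ∀ p : KG G, ι (leftMulKG g p) = ρ g (ι p)) :
    (∀ g : G, ∀ p q : KG G,
      dist (ι (leftMulKG g p)) (ι (leftMulKG g q)) = dist (ι p) (ι q)) ∧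
    (∀ g : G,
      |(⨅ p : KG G, dist (ι p) (ι (leftMulKG g p))) - translationLength (ρ g)|
        ≤ 28 * Δ) := by
  refine ⟨fun g p q => by rw [hequiv, hequiv, (ρ g).dist_eq], fun g => ?_⟩
  have : Nonempty (KG G) := ⟨vtx 1⟩
  have : Nonempty H := ⟨ι (vtx 1)⟩
  have hbdd : BddBelow (range fun p => dist (ι p) (ι (leftMulKG g p))) :=
    ⟨0, forall_mem_range.2 fun _ => dist_nonneg⟩
  have hlower : translationLength (ρ g) ≤ ⨅ p, dist (ι p) (ι (leftMulKG g p)) :=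
    le_ciInf fun p => hequiv g p ▸ translationLength_le_dist _ _
  have hupper : (⨅ p, dist (ι p) (ι (leftMulKG g p))) - 16 * Δ ≤ translationLength (ρ g) := by
    refine le_ciInf fun x => sub_le_iff_le_add.2 ?_
    obtain ⟨p, hp⟩ := hstraight.exists_dist_apply_le hthin hgeo (ρ g) (u := 1) (v := g)
      (by rw [← hequiv, leftMulKG_vtx, mul_one]) x
    exact (hequiv g p ▸ ciInf_le hbdd p).trans hp
  have hΔ := hthin.nonneg (ι (vtx 1))
  rw [abs_le]
  constructor <;> linarith

/-- For a `ρ`-equivariant straight map `ι : K(G) → H` into a geodesic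
space with `Δ`-thin triangles, the left multiplication action of `G` on `K(G)` preserves
the pullback pseudo-metric, and translation lengths on `K(G)` and on `H` differ by at
most `28Δ`. -/
theorem translation_length_pullback_estimate {G : Type u} [Group G]
    {H : Type v} [MetricSpace H] [Nonempty H] {Δ : ℝ} (hΔ : 0 < Δ)
    (hgeo : GeodesicSpace H) (hthin : ThinTriangles H Δ)
    (ρ : G →* (H ≃ᵢ H)) (ι : KG G → H)
    (hstraight : StraightOnKG ι)
    (hequiv : ∀ g : G, ∀ p : KG G, ι (leftMulKG g p) = ρ g (ι p)) :
    (∀ g : G, ∀ p q : KG G,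
      dist (ι (leftMulKG g p)) (ι (leftMulKG g q)) = dist (ι p) (ι q)) ∧
    (∀ g : G,
      |(⨅ p : KG G, dist (ι p) (ι (leftMulKG g p))) - translationLength (ρ g)|
        ≤ 28 * Δ) :=
  translation_length_pullback_estimate_general hgeo hthin ρ ι hstraight hequiv
end
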